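/- Let q ≥ 5 be an odd integer and ε ∈ (0, 1/2], and let θ_q = q cos(π/q)/(1 + cos(π/q)) (the Lovász theta function of the q-cycle). Then for every rate R > log₂ θ_q, the reliability function of the typewriter channel satisfies E(R) ≤ log₂(1/ε). -/

import Mathlib

/-- The typewriter channel transition probabilities on `ZMod q`. -/
noncomputable def W (q : ℕ) (ε : ℝ) (y x : ZMod q) : ℝ :=
  if y = x then 1 - ε else if y = x + 1 then ε else 0

/-- `α_ε = √(ε(1-ε))`. -/
noncomputable def alphaE (ε : ℝ) : ℝ := Real.sqrt (ε * (1 - ε))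

/-- The `n`-fold memoryless extension `Wⁿ(y|x) = ∏ₖ W(yₖ|xₖ)`. -/
noncomputable def Wn (q : ℕ) [NeZero q] (n : ℕ) (ε : ℝ) (y x : Fin n → ZMod q) : ℝ :=
  ∏ k, W q ε (y k) (x k)

/-- `Pe(M,n)`: the smallest average error probability over all encoders
`f : Fin M → (ZMod q)ⁿ` and decoders `φ : (ZMod q)ⁿ → Fin M`. -/
noncomputable def Pe (q : ℕ) [NeZero q] (ε : ℝ) (M n : ℕ) : ℝ :=
  sInf {p : ℝ | ∃ f : Fin M → (Fin n → ZMod q), ∃ φ : (Fin n → ZMod q) → Fin M,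
    p = (1 / M) * ∑ m : Fin M, ∑ y : Fin n → ZMod q,
      if φ y = m then 0 else Wn q n ε y (f m)}

/-- The reliability function
`E(R) = limsup_{n→∞} (1/n) log₂ (1 / Pe(⌈2^{nR}⌉, n))`. -/
noncomputable def EReliability (q : ℕ) [NeZero q] (ε : ℝ) (R : ℝ) : ℝ :=
  Filter.limsup (fun n : ℕ =>
    (1 / (n : ℝ)) * Real.logb 2 (1 / Pe q ε (⌈(2 : ℝ) ^ ((n : ℝ) * R)⌉₊) n))
    Filter.atTop

/-- Binary entropy function (base 2), extended by `log 0 = 0`. -/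
noncomputable def h2 (x : ℝ) : ℝ := -(x * Real.logb 2 x) - (1 - x) * Real.logb 2 (1 - x)

/-!
Codewords `s, t` for which some coordinate difference lies outside `{-1, 0, 1}` can never produce
the same output, and a set of such words has at most `θ_qⁿ` elements: this is Lovász's bound for
the strong powers of the `q`-cycle, obtained from the nonnegative Fourier weights `cycleWeight`.
For a code with `M ≥ 2 θ_qⁿ` messages, the messages decoded correctly on every output their
codeword can produce form such a set, so at least `M / 2` messages are decoded wrongly on some
output, which has probability at least `εⁿ`. Hence `Pe ≥ εⁿ / 2` as soon as `2^{nR} ≥ 2 θ_qⁿ`,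
which holds for all large `n` because `R > log₂ θ_q`.
-/

open Finset Real Filter Topology

section Fourier

variable {A ι κ : Type*} [AddCommGroup A] [Finite A] [Fintype ι] [Fintype κ] [DecidableEq κ]

theorem sum_sum_prod_sum_addChar_eq (χ : ι → AddChar A ℂ) (c : ι → ℝ) (S : Finset (κ → A)) :
    ∑ s ∈ S, ∑ t ∈ S, ∏ k, ∑ j, (c j : ℂ) * χ j (s k - t k) =
      ∑ J : κ → ι, ((∏ k, c (J k)) * Complex.normSq (∑ s ∈ S, ∏ k, χ (J k) (s k)) : ℝ) := by
  simp_rw [Complex.ofReal_sum, Complex.ofReal_mul, ← Complex.mul_conj, map_sum, map_prod,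
    sum_mul_sum, mul_sum, ← AddChar.map_neg_eq_conj (K := ℂ), ← prod_mul_distrib,
    Fintype.prod_sum, Complex.ofReal_prod]
  simp_rw [sub_eq_add_neg, AddChar.map_add_eq_mul, prod_mul_distrib]
  exact (Finset.sum_congr rfl fun s _ => Finset.sum_comm).trans Finset.sum_comm

theorem pow_mul_card_le_sum_pow (χ : ι → AddChar A ℂ) {c : ι → ℝ} (hc : ∀ j, 0 ≤ c j)
    {j₀ : ι} (hj₀ : χ j₀ = 1) {S : Finset (κ → A)}
    (hS : (S : Set (κ → A)).Pairwise fun s t => ∏ k, ∑ j, (c j : ℂ) * χ j (s k - t k) = 0) :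
    c j₀ ^ Fintype.card κ * #S ≤ (∑ j, c j) ^ Fintype.card κ := by
  have hdiag : ∑ s ∈ S, ∑ t ∈ S, ∏ k, ∑ j, (c j : ℂ) * χ j (s k - t k) =
      ((#S * (∑ j, c j) ^ Fintype.card κ : ℝ) : ℂ) := by
    rw [Finset.sum_congr rfl fun s hs => Finset.sum_eq_single_of_mem s hs
      fun t ht hts => hS hs ht (Ne.symm hts)]
    simp
  have hsq : c j₀ ^ Fintype.card κ * #S ^ 2 ≤ #S * (∑ j, c j) ^ Fintype.card κ := by
    rw [Complex.ofReal_inj.mp (hdiag.symm.trans (sum_sum_prod_sum_addChar_eq χ c S))]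
    calc c j₀ ^ Fintype.card κ * #S ^ 2
        = (∏ _k : κ, c j₀) * Complex.normSq (∑ s ∈ S, ∏ k, χ j₀ (s k)) := by
          simp [hj₀, sq]
      _ ≤ _ := Finset.single_le_sum (f := fun J : κ → ι => (∏ k, c (J k)) *
            Complex.normSq (∑ s ∈ S, ∏ k, χ (J k) (s k)))
          (fun J _ => mul_nonneg (prod_nonneg fun k _ => hc _) (Complex.normSq_nonneg _))
          (mem_univ fun _ => j₀)
  rcases (#S).eq_zero_or_pos with h | h
  · simpa [h] using pow_nonneg (sum_nonneg fun j _ => hc j) _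
  · exact le_of_mul_le_mul_right (by linarith) (Nat.cast_pos.mpr h)

end Fourier

section Cycle

open ZMod

variable {q : ℕ}

noncomputable def thetaCycle (q : ℕ) : ℝ := q * cos (π / q) / (1 + cos (π / q))

lemma cos_pi_div_pos (hq : 3 ≤ q) : 0 < cos (π / q) := by
  have hq' : (3 : ℝ) ≤ q := by exact_mod_cast hq
  apply cos_pos_of_mem_Ioo
  constructor
  · linarith [div_pos pi_pos (by linarith : (0 : ℝ) < q), pi_pos]
  · exact div_lt_div_of_pos_left pi_pos two_pos (by linarith)

lemma thetaCycle_pos (hq : 3 ≤ q) : 0 < thetaCycle q := by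
  have := cos_pi_div_pos hq
  have : (0 : ℝ) < q := by exact_mod_cast (by omega : 0 < q)
  unfold thetaCycle
  positivity

lemma neg_cos_pi_div_le_cos (hqo : Odd q) {v : ℕ} (hv : v < q) :
    -cos (π / q) ≤ cos (2 * π * v / q) := by
  have hq : (0 : ℝ) < q := by exact_mod_cast hv.pos
  wlog hvq : 2 * v + 1 ≤ q generalizing v
  · have hv' : 2 * (q - v) + 1 ≤ q := by
      obtain ⟨r, rfl⟩ := hqo
      omega
    have := this (v := q - v) (by omega) hv'
    rwa [Nat.cast_sub hv.le, mul_sub, sub_div, mul_div_cancel_right₀ _ hq.ne', cos_two_pi_sub]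
      at this
  have hvq' : (2 * v + 1 : ℝ) ≤ q := by exact_mod_cast hvq
  rw [← cos_pi_sub]
  apply cos_le_cos_of_nonneg_of_le_pi (by positivity) (by linarith [div_pos pi_pos hq])
  rw [div_le_iff₀ hq, sub_mul, div_mul_cancel₀ _ hq.ne']
  nlinarith [pi_pos]

variable [NeZero q]

lemma re_stdAddChar (j : ZMod q) : (stdAddChar j).re = cos (2 * π * j.val / q) := by
  rw [stdAddChar_apply, toCircle_apply, ← Complex.exp_ofReal_mul_I_re]
  push_cast
  ring_nf

-- Up to the factor `q`, the Fourier transform of the kernel taking the value `θ_q` at `0`,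
-- `θ_q / (2 cos (π / q))` at `±1` and `0` elsewhere: an optimal solution of Lovász's program.
noncomputable def cycleWeight (q : ℕ) [NeZero q] (j : ZMod q) : ℝ :=
  thetaCycle q / q * (1 + (stdAddChar j).re / cos (π / q))

lemma cycleWeight_nonneg (hq : 3 ≤ q) (hqo : Odd q) (j : ZMod q) : 0 ≤ cycleWeight q j := by
  have hcos := cos_pi_div_pos hq
  have hre : -cos (π / q) ≤ (stdAddChar j).re :=
    re_stdAddChar j ▸ neg_cos_pi_div_le_cos hqo (ZMod.val_lt j)
  have : 0 ≤ 1 + (stdAddChar j).re / cos (π / q) := by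
    rw [← div_self hcos.ne', ← add_div]
    exact div_nonneg (by linarith) hcos.le
  have := thetaCycle_pos hq
  unfold cycleWeight
  positivity

lemma cycleWeight_zero (hq : 3 ≤ q) : cycleWeight q 0 = 1 := by
  have := cos_pi_div_pos hq
  have : (q : ℝ) ≠ 0 := NeZero.ne _
  simp only [cycleWeight, thetaCycle, AddChar.map_zero_eq_one, Complex.one_re]
  field_simp
  ring

lemma sum_cycleWeight (hq : 3 ≤ q) : ∑ j, cycleWeight q j = thetaCycle q := by
  have : Fact (1 < q) := ⟨by omega⟩
  have hsum : ∑ j : ZMod q, (stdAddChar j).re = 0 := by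
    rw [← Complex.re_sum]
    simpa using congr_arg Complex.re
      (AddChar.sum_mulShift 1 (isPrimitive_stdAddChar q))
  simp only [cycleWeight, ← mul_sum, sum_add_distrib, ← sum_div, hsum]
  simp [(NeZero.ne q)]

lemma cycleWeight_eq (j : ZMod q) :
    (cycleWeight q j : ℂ) = thetaCycle q / q +
      thetaCycle q / (2 * q * cos (π / q)) * (stdAddChar j + stdAddChar (-j)) := by
  rw [AddChar.map_neg_eq_conj, Complex.add_conj, cycleWeight]
  push_cast
  ring

lemma sum_cycleWeight_mul_stdAddChar_eq_zero {d : ZMod q} (hd : d ∉ ({-1, 0, 1} : Set (ZMod q))) :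
    ∑ j, (cycleWeight q j : ℂ) * stdAddChar (j * d) = 0 := by
  simp only [Set.mem_insert_iff, Set.mem_singleton_iff, not_or] at hd
  have hsum (b : ZMod q) (hb : b ≠ 0) : ∑ j, stdAddChar (j * b) = 0 := by
    simpa [hb] using AddChar.sum_mulShift b (isPrimitive_stdAddChar q)
  have hterm (j : ZMod q) : (cycleWeight q j : ℂ) * stdAddChar (j * d) =
      thetaCycle q / q * stdAddChar (j * d) + thetaCycle q / (2 * q * cos (π / q)) *
        (stdAddChar (j * (d + 1)) + stdAddChar (j * (d - 1))) := by
    simp only [cycleWeight_eq, sub_eq_add_neg, mul_add, mul_neg, mul_one,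
      AddChar.map_add_eq_mul]
    ring
  simp only [hterm, sum_add_distrib, ← mul_sum,
    hsum d hd.2.1, hsum (d + 1) fun h => hd.1 (eq_neg_of_add_eq_zero_left h),
    hsum (d - 1) (sub_ne_zero.mpr hd.2.2)]
  simp

theorem card_le_thetaCycle_pow (hq : 3 ≤ q) (hqo : Odd q) {n : ℕ} {S : Finset (Fin n → ZMod q)}
    (hS : (S : Set (Fin n → ZMod q)).Pairwise
      fun s t => ∃ k, s k - t k ∉ ({-1, 0, 1} : Set (ZMod q))) :
    (#S : ℝ) ≤ thetaCycle q ^ n := by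
  have := pow_mul_card_le_sum_pow (fun j => stdAddChar.mulShift j)
    (cycleWeight_nonneg hq hqo) (AddChar.mulShift_zero _) (S := S) fun s hs t ht hst => by
      obtain ⟨k, hk⟩ := hS hs ht hst
      exact prod_eq_zero (mem_univ k) (sum_cycleWeight_mul_stdAddChar_eq_zero hk)
  simpa [cycleWeight_zero hq, sum_cycleWeight hq] using this

end Cycle

section Typewriter

variable {q : ℕ} {ε : ℝ} {n : ℕ}

lemma W_nonneg (hε : 0 ≤ ε) (hε' : ε ≤ 1) (y x : ZMod q) : 0 ≤ W q ε y x := by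
  unfold W
  split_ifs <;> linarith

lemma le_W (hε' : ε ≤ 1 / 2) {x y : ZMod q} (h : y = x ∨ y = x + 1) : ε ≤ W q ε y x := by
  unfold W
  split_ifs <;> grind

-- The outputs that the input `x` can produce: the support of `Wn q n ε · x` when `0 < ε < 1`.
def outputSet (x : Fin n → ZMod q) : Set (Fin n → ZMod q) := {y | ∀ k, y k = x k ∨ y k = x k + 1}

lemma mem_outputSet_self (x : Fin n → ZMod q) : x ∈ outputSet x := fun _ => Or.inl rfl

lemma outputSet_inter_nonempty {a b : Fin n → ZMod q}
    (h : ∀ k, a k - b k ∈ ({-1, 0, 1} : Set (ZMod q))) : (outputSet a ∩ outputSet b).Nonempty := by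
  refine ⟨fun k => if a k - b k = -1 then b k else a k, fun k => ?_, fun k => ?_⟩ <;>
    have := h k <;> simp only [Set.mem_insert_iff, Set.mem_singleton_iff] at this <;>
    dsimp only <;> split_ifs <;> grind

variable [NeZero q]

lemma sum_W [Nontrivial (ZMod q)] (x : ZMod q) : ∑ y, W q ε y x = 1 := by
  rw [Fintype.sum_eq_add x (x + 1) (by simp) fun y hy => by simp [W, hy.1, hy.2]]
  simp [W]

lemma Wn_nonneg (hε : 0 ≤ ε) (hε' : ε ≤ 1) (y x : Fin n → ZMod q) : 0 ≤ Wn q n ε y x :=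
  prod_nonneg fun _ _ => W_nonneg hε hε' _ _

lemma sum_Wn [Nontrivial (ZMod q)] (x : Fin n → ZMod q) : ∑ y, Wn q n ε y x = 1 := by
  simp only [Wn]
  rw [← Fintype.prod_sum (fun k v => W q ε v (x k))]
  simp [sum_W]

lemma pow_le_Wn (hε : 0 ≤ ε) (hε' : ε ≤ 1 / 2) {x y : Fin n → ZMod q} (hy : y ∈ outputSet x) :
    ε ^ n ≤ Wn q n ε y x := by
  simpa [Wn] using prod_le_prod (s := univ) (fun _ _ => hε) fun k _ => le_W hε' (hy k)

end Typewriter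

section Code

variable {q : ℕ} [NeZero q] {ε : ℝ} {M n : ℕ}

noncomputable def messageError (ε : ℝ) (f : Fin M → Fin n → ZMod q)
    (φ : (Fin n → ZMod q) → Fin M) (m : Fin M) : ℝ :=
  ∑ y, if φ y = m then 0 else Wn q n ε y (f m)

noncomputable def errorProb (ε : ℝ) (f : Fin M → Fin n → ZMod q)
    (φ : (Fin n → ZMod q) → Fin M) : ℝ :=
  1 / M * ∑ m, messageError ε f φ m

variable {f : Fin M → Fin n → ZMod q} {φ : (Fin n → ZMod q) → Fin M}

lemma messageError_nonneg (hε : 0 ≤ ε) (hε' : ε ≤ 1) (m : Fin M) : 0 ≤ messageError ε f φ m :=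
  sum_nonneg fun y _ => by split_ifs <;> [rfl; exact Wn_nonneg hε hε' _ _]

lemma messageError_le_one [Nontrivial (ZMod q)] (hε : 0 ≤ ε) (hε' : ε ≤ 1) (m : Fin M) :
    messageError ε f φ m ≤ 1 := by
  rw [← sum_Wn (ε := ε) (f m)]
  exact sum_le_sum fun y _ => by split_ifs <;> [exact Wn_nonneg hε hε' _ _; rfl]

lemma pow_le_messageError (hε : 0 ≤ ε) (hε' : ε ≤ 1 / 2) {m : Fin M} {y : Fin n → ZMod q}
    (hy : y ∈ outputSet (f m)) (hφ : φ y ≠ m) : ε ^ n ≤ messageError ε f φ m := by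
  refine le_trans ?_ (single_le_sum (f := fun y => if φ y = m then 0 else Wn q n ε y (f m))
    (fun y _ => ?_) (mem_univ y))
  · simpa [hφ] using pow_le_Wn hε hε' hy
  · split_ifs <;> [rfl; exact Wn_nonneg hε (by linarith) _ _]

lemma errorProb_le_one [Nontrivial (ZMod q)] (hε : 0 ≤ ε) (hε' : ε ≤ 1) :
    errorProb ε f φ ≤ 1 := by
  rcases M.eq_zero_or_pos with rfl | hM
  · simp [errorProb]
  calc errorProb ε f φ ≤ 1 / M * ∑ _m : Fin M, 1 :=
        mul_le_mul_of_nonneg_left (sum_le_sum fun m _ => messageError_le_one hε hε' m)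
          (by positivity)
    _ = 1 := by field_simp; simp

lemma Pe_le_errorProb (hε : 0 ≤ ε) (hε' : ε ≤ 1) (f : Fin M → Fin n → ZMod q)
    (φ : (Fin n → ZMod q) → Fin M) : Pe q ε M n ≤ errorProb ε f φ := by
  refine csInf_le ⟨0, ?_⟩ ⟨f, φ, rfl⟩
  rintro _ ⟨f, φ, rfl⟩
  exact mul_nonneg (by positivity) (sum_nonneg fun m _ => messageError_nonneg hε hε' m)

lemma le_Pe (hM : 0 < M) {b : ℝ} (h : ∀ (f : Fin M → Fin n → ZMod q) φ, b ≤ errorProb ε f φ) :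
    b ≤ Pe q ε M n := by
  refine le_csInf ⟨_, fun _ _ => 0, fun _ => ⟨0, hM⟩, rfl⟩ ?_
  rintro _ ⟨f, φ, rfl⟩
  exact h f φ

lemma Pe_le_one [Nontrivial (ZMod q)] (hε : 0 ≤ ε) (hε' : ε ≤ 1) (hM : 0 < M) :
    Pe q ε M n ≤ 1 :=
  (Pe_le_errorProb hε hε' (fun _ => 0) fun _ => ⟨0, hM⟩).trans (errorProb_le_one hε hε')

theorem card_le_thetaCycle_pow_of_decode (hq : 3 ≤ q) (hqo : Odd q) {G : Finset (Fin M)}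
    (hG : ∀ m ∈ G, ∀ y ∈ outputSet (f m), φ y = m) : (#G : ℝ) ≤ thetaCycle q ^ n := by
  classical
  have hinj : Set.InjOn f G := fun a ha b hb hab => by
    rw [← hG a ha _ (mem_outputSet_self _), hab, hG b hb _ (mem_outputSet_self _)]
  rw [← card_image_of_injOn hinj]
  refine card_le_thetaCycle_pow hq hqo ?_
  rw [coe_image]
  rintro _ ⟨a, ha, rfl⟩ _ ⟨b, hb, rfl⟩ hab
  by_contra! hconf
  obtain ⟨y, hya, hyb⟩ := outputSet_inter_nonempty hconf
  exact hab (congrArg f ((hG a ha y hya).symm.trans (hG b hb y hyb)))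

theorem pow_mul_sub_le_sum_messageError (hq : 3 ≤ q) (hqo : Odd q) (hε : 0 ≤ ε)
    (hε' : ε ≤ 1 / 2) (f : Fin M → Fin n → ZMod q) (φ : (Fin n → ZMod q) → Fin M) :
    ε ^ n * (M - thetaCycle q ^ n) ≤ ∑ m, messageError ε f φ m := by
  classical
  set G := univ.filter fun m => ∀ y ∈ outputSet (f m), φ y = m
  have hG : (#G : ℝ) ≤ thetaCycle q ^ n :=
    card_le_thetaCycle_pow_of_decode hq hqo fun m hm => (mem_filter.1 hm).2
  have hbad (m : Fin M) (hm : m ∈ Gᶜ) : ε ^ n ≤ messageError ε f φ m := by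
    obtain ⟨y, hy, hφ⟩ : ∃ y ∈ outputSet (f m), φ y ≠ m := by simpa [G] using hm
    exact pow_le_messageError hε hε' hy hφ
  calc ε ^ n * (M - thetaCycle q ^ n) ≤ ε ^ n * #Gᶜ := by
        rw [card_compl, Fintype.card_fin,
          Nat.cast_sub (G.card_le_univ.trans_eq (Fintype.card_fin M))]
        gcongr
    _ = ∑ m ∈ Gᶜ, ε ^ n := by simp [mul_comm]
    _ ≤ ∑ m ∈ Gᶜ, messageError ε f φ m := sum_le_sum hbad
    _ ≤ ∑ m, messageError ε f φ m := sum_le_sum_of_subset_of_nonneg (subset_univ _)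
        fun m _ _ => messageError_nonneg hε (by linarith) m

theorem pow_div_two_le_Pe (hq : 3 ≤ q) (hqo : Odd q) (hε : 0 ≤ ε) (hε' : ε ≤ 1 / 2)
    (hM : 2 * thetaCycle q ^ n ≤ M) : ε ^ n / 2 ≤ Pe q ε M n := by
  have hθ := pow_pos (thetaCycle_pos hq) n
  have hM0 : (0 : ℝ) < M := by linarith
  refine le_Pe (by exact_mod_cast hM0) fun f φ => ?_
  have := pow_mul_sub_le_sum_messageError hq hqo hε hε' f φ
  rw [errorProb, one_div_mul_eq_div, le_div_iff₀ hM0]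
  nlinarith [mul_nonneg (pow_nonneg hε n) (by linarith : (0 : ℝ) ≤ M - 2 * thetaCycle q ^ n)]

end Code

section Asymptotics

lemma eventually_two_mul_pow_le_ceil {θ R : ℝ} (hθ : 0 < θ) (hR : logb 2 θ < R) :
    ∀ᶠ n : ℕ in atTop, 2 * θ ^ n ≤ ⌈(2 : ℝ) ^ ((n : ℝ) * R)⌉₊ := by
  have h2R : (0 : ℝ) < 2 ^ R := by positivity
  have hr : θ / 2 ^ R < 1 := (div_lt_one h2R).mpr ((logb_lt_iff_lt_rpow one_lt_two hθ).mp hR)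
  filter_upwards [(tendsto_pow_atTop_nhds_zero_of_lt_one (by positivity) hr).eventually
    (gt_mem_nhds one_half_pos)] with n hn
  calc 2 * θ ^ n = 2 * (θ / 2 ^ R) ^ n * (2 ^ R) ^ n := by
        rw [div_pow, mul_assoc, div_mul_cancel₀ _ (by positivity)]
    _ ≤ (2 ^ R) ^ n := by nlinarith [pow_pos h2R n]
    _ = 2 ^ ((n : ℝ) * R) := by rw [← rpow_natCast, ← rpow_mul zero_le_two, mul_comm]
    _ ≤ _ := Nat.le_ceil _

lemma limsup_le_of_eventually_le_add {α : Type*} {l : Filter α} [l.NeBot] {u v : α → ℝ}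
    {a b : ℝ} (hu : ∀ᶠ x in l, b ≤ u x) (hv : Tendsto v l (𝓝 0))
    (h : ∀ᶠ x in l, u x ≤ a + v x) : limsup u l ≤ a := by
  have hav : Tendsto (fun x => a + v x) l (𝓝 a) := by simpa using tendsto_const_nhds.add hv
  calc limsup u l ≤ limsup (fun x => a + v x) l :=
        limsup_le_limsup h (isCoboundedUnder_le_of_eventually_le l hu) hav.isBoundedUnder_le
    _ = a := hav.limsup_eq

lemma one_div_mul_logb_one_div_le {ε P : ℝ} {n : ℕ} (hn : 0 < n) (hε : 0 < ε)
    (hP : ε ^ n / 2 ≤ P) : 1 / n * logb 2 (1 / P) ≤ logb 2 (1 / ε) + 1 / n := by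
  have hP0 : 0 < P := (by positivity : 0 < ε ^ n / 2).trans_le hP
  have hlog : logb 2 (1 / P) ≤ 1 + n * logb 2 (1 / ε) := calc
    logb 2 (1 / P) ≤ logb 2 (2 * (1 / ε) ^ n) := by
      apply logb_le_logb_of_le one_lt_two (by positivity)
      rw [one_div_pow, ← div_eq_mul_one_div, one_div_le hP0 (by positivity)]
      simpa using hP
    _ = 1 + n * logb 2 (1 / ε) := by
      rw [logb_mul two_ne_zero (by positivity), logb_self_eq_one one_lt_two, logb_pow]
  have hn' : (0 : ℝ) < n := by exact_mod_cast hn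
  calc 1 / n * logb 2 (1 / P) ≤ 1 / n * (1 + n * logb 2 (1 / ε)) := by gcongr
    _ = logb 2 (1 / ε) + 1 / n := by field_simp; ring

end Asymptotics

theorem stmt8 (q : ℕ) [NeZero q] (hq : 5 ≤ q) (hqo : Odd q)
    (ε : ℝ) (hε : 0 < ε) (hε' : ε ≤ 1 / 2)
    (R : ℝ)
    (hR : Real.logb 2 ((q : ℝ) * Real.cos (Real.pi / q) / (1 + Real.cos (Real.pi / q))) < R) :
    EReliability q ε R ≤ Real.logb 2 (1 / ε) := by
  have : Fact (1 < q) := ⟨by omega⟩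
  have hq3 : 3 ≤ q := by omega
  have hPe : ∀ᶠ n : ℕ in atTop, ε ^ n / 2 ≤ Pe q ε ⌈(2 : ℝ) ^ ((n : ℝ) * R)⌉₊ n :=
    (eventually_two_mul_pow_le_ceil (thetaCycle_pos hq3) hR).mono fun n hn =>
      pow_div_two_le_Pe hq3 hqo hε.le hε' hn
  refine limsup_le_of_eventually_le_add (b := 0) ?_ tendsto_one_div_atTop_nhds_zero_nat ?_
  · filter_upwards [hPe] with n hn
    have hM : 0 < ⌈(2 : ℝ) ^ ((n : ℝ) * R)⌉₊ := Nat.ceil_pos.mpr (by positivity)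
    have hP0 : 0 < Pe q ε _ n := (by positivity : 0 < ε ^ n / 2).trans_le hn
    exact mul_nonneg (by positivity) (logb_nonneg one_lt_two
      (one_le_one_div hP0 (Pe_le_one hε.le (by linarith) hM)))
  · filter_upwards [hPe, eventually_gt_atTop 0] with n hn hn0
    exact one_div_mul_logb_one_div_le hn0 hε hn
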